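/- Let λ ≥ 2 and define ω(t, T₁, T₂) = (e^λ/(2π)) ∫_{T₁}^{T₂} Γ(λ + i(u−t)) λ^{−(λ+i(u−t))} du. Suppose Δ > 0 and either t ≤ T₁ − Δ or t ≥ T₂ + Δ, with Δ ≤ λ and T₂ − T₁ ≤ λ. Then |ω(t, T₁, T₂)| ≤ C λ^{1/2} exp(−Δ²/(4λ)) for an absolute constant C. -/

import Mathlib

open Real Complex MeasureTheory Finset

lemma abs_Gamma_le_prod (x y : ℝ) (hx : 0 < x) (m : ℕ) :
    ‖Complex.Gamma (x + y * I)‖ ≤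
      Real.Gamma x * ∏ j ∈ range (m + 1), ((x + j) / Real.sqrt ((x + j) ^ 2 + y ^ 2)) := by
  set P : ℝ := ∏ j ∈ range (m + 1), ((x + j) / Real.sqrt ((x + j) ^ 2 + y ^ 2)) with hP
  have ha : ∀ j : ℕ, 0 < x + (j : ℝ) := fun j => by positivity
  have hb : ∀ j : ℕ, 0 < Real.sqrt ((x + j) ^ 2 + y ^ 2) := fun j => by positivity
  have hab : ∀ j : ℕ, x + (j : ℝ) ≤ Real.sqrt ((x + j) ^ 2 + y ^ 2) := by
    intro j
    have h := Real.sqrt_le_sqrt (show (x+(j:ℝ))^2 ≤ (x+j)^2 + y^2 by nlinarith [sq_nonneg y])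
    rwa [Real.sqrt_sq (ha j).le] at h
  have h1 : Filter.Tendsto (fun n => ‖Complex.GammaSeq (x + y * I) n‖)
      Filter.atTop (nhds (‖Complex.Gamma (x + y * I)‖)) :=
    (continuous_norm.tendsto _).comp (Complex.GammaSeq_tendsto_Gamma _)
  have h2 : Filter.Tendsto (fun n => Real.GammaSeq x n * P) Filter.atTop
      (nhds (Real.Gamma x * P)) :=
    (Real.GammaSeq_tendsto_Gamma x).mul_const P
  refine le_of_tendsto_of_tendsto h1 h2 ?_
  filter_upwards [Filter.eventually_ge_atTop (m + 1)] with n hn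
  have hn1 : (1:ℕ) ≤ n := le_trans (Nat.le_add_left 1 m) hn
  have hnn : (0:ℝ) < n := by exact_mod_cast hn1
  -- compute abs of GammaSeq
  have habs : ∀ j ∈ range (n + 1), ‖x + y * I + (j:ℕ)‖ =
      Real.sqrt ((x + j) ^ 2 + y ^ 2) := by
    intro j _
    rw [show (x : ℂ) + y * I + (j:ℕ) = ((x + (j:ℝ) : ℝ) : ℂ) + (y:ℝ) * I by push_cast; ring]
    exact Complex.norm_add_mul_I _ _
  have key : ‖Complex.GammaSeq (x + y * I) n‖
      = (n:ℝ) ^ x * (Nat.factorial n : ℝ) / ∏ j ∈ range (n + 1), Real.sqrt ((x + j) ^ 2 + y ^ 2) := by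
    rw [Complex.GammaSeq, norm_div, norm_mul, Complex.norm_natCast, norm_prod,
      Finset.prod_congr rfl habs]
    congr 2
    rw [show ((n:ℂ)) = (((n:ℝ)):ℂ) by push_cast; rfl, Complex.norm_cpow_eq_rpow_re_of_pos hnn]
    simp
  rw [key, Real.GammaSeq]
  rw [div_le_iff₀ (by positivity), div_mul_eq_mul_div, div_mul_eq_mul_div,
    le_div_iff₀ (by positivity)]
  have hsplit : ∀ f : ℕ → ℝ, (∏ j ∈ range (n+1), f j)
      = (∏ j ∈ range (m+1), f j) * ∏ j ∈ Ico (m+1) (n+1), f j := by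
    intro f
    rw [Finset.prod_range_mul_prod_Ico f (by omega)]
  have hPnn : 0 ≤ P := by
    rw [hP]; exact Finset.prod_nonneg fun j _ => by positivity
  have hIco : (∏ j ∈ Ico (m+1) (n+1), (x + (j:ℝ)))
      ≤ ∏ j ∈ Ico (m+1) (n+1), Real.sqrt ((x + j) ^ 2 + y ^ 2) :=
    Finset.prod_le_prod (fun j _ => (ha j).le) (fun j _ => hab j)
  have hPb : (∏ j ∈ range (m+1), (x+(j:ℝ)))
      = P * ∏ j ∈ range (m+1), Real.sqrt ((x + j) ^ 2 + y ^ 2) := by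
    rw [hP, ← Finset.prod_mul_distrib]
    refine Finset.prod_congr rfl fun j _ => ?_
    field_simp
  rw [hsplit (fun j => x + (j:ℝ)), hsplit (fun j => Real.sqrt ((x + j) ^ 2 + y ^ 2)), hPb]
  have hA : (0:ℝ) ≤ (↑n:ℝ)^x * (Nat.factorial n : ℝ) := by positivity
  have hB : (0:ℝ) ≤ ∏ j ∈ range (m+1), Real.sqrt ((x + j) ^ 2 + y ^ 2) :=
    Finset.prod_nonneg fun j _ => (hb j).le
  nlinarith [mul_le_mul_of_nonneg_left hIco (mul_nonneg (mul_nonneg hA hPnn) hB)]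

lemma factorial_le_stirling (k : ℕ) (hk : 1 ≤ k) :
    (Nat.factorial k : ℝ) ≤ Real.exp 1 * ((k:ℝ) ^ ((k:ℝ) + 1/2) * Real.exp (-(k:ℝ))) := by
  have hkR : (0:ℝ) < k := by exact_mod_cast hk
  have hspos : 0 < Stirling.stirlingSeq k := by
    rw [Stirling.stirlingSeq]
    positivity
  have hmono : Stirling.stirlingSeq k ≤ Real.exp 1 / Real.sqrt 2 := by
    rw [← Stirling.stirlingSeq_one]
    obtain ⟨j, rfl⟩ : ∃ j, k = j + 1 := ⟨k - 1, by omega⟩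
    have h := Stirling.log_stirlingSeq'_antitone (Nat.zero_le j)
    simp only [Function.comp_apply, Nat.succ_eq_add_one, Nat.zero_add] at h
    have h1pos : 0 < Stirling.stirlingSeq 1 := by
      rw [Stirling.stirlingSeq_one]; positivity
    exact (Real.log_le_log_iff hspos h1pos).mp h
  have hfact : (Nat.factorial k : ℝ)
      = Stirling.stirlingSeq k * (Real.sqrt (2 * k) * ((k:ℝ) / Real.exp 1) ^ k) := by
    rw [Stirling.stirlingSeq]
    field_simp
  have hb : Real.sqrt (2 * k) * ((k:ℝ) / Real.exp 1) ^ k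
      = Real.sqrt 2 * ((k:ℝ) ^ ((k:ℝ) + 1/2) * Real.exp (-(k:ℝ))) := by
    rw [Real.sqrt_mul (by norm_num : (0:ℝ) ≤ 2), div_pow, Real.exp_one_pow,
      Real.rpow_add hkR, Real.rpow_natCast, Real.sqrt_eq_rpow, Real.exp_neg]
    field_simp
    rw [Real.sqrt_eq_rpow]
  rw [hfact, hb]
  have hX : 0 ≤ (k:ℝ) ^ ((k:ℝ) + 1/2) * Real.exp (-(k:ℝ)) := by positivity
  calc Stirling.stirlingSeq k * (Real.sqrt 2 * ((k:ℝ) ^ ((k:ℝ) + 1/2) * Real.exp (-(k:ℝ))))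
      ≤ (Real.exp 1 / Real.sqrt 2) * (Real.sqrt 2 * ((k:ℝ) ^ ((k:ℝ) + 1/2) * Real.exp (-(k:ℝ)))) := by
        apply mul_le_mul_of_nonneg_right hmono (by positivity)
    _ = Real.exp 1 * ((k:ℝ) ^ ((k:ℝ) + 1/2) * Real.exp (-(k:ℝ))) := by
        have h2 : Real.sqrt 2 ≠ 0 := by positivity
        field_simp

lemma Gamma_le_stirling (x : ℝ) (hx : 2 ≤ x) :
    Real.Gamma x ≤ 21 * (x ^ (x - 1/2) * Real.exp (-x)) := by
  have hx0 : (0:ℝ) < x := by linarith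
  set m : ℕ := ⌊x⌋₊ with hm
  have hm2 : 2 ≤ m := Nat.le_floor (by exact_mod_cast hx)
  have hmx : (m:ℝ) ≤ x := Nat.floor_le hx0.le
  have hxm : x < (m:ℝ) + 1 := Nat.lt_floor_add_one x
  set θ : ℝ := x - m with hθ
  have hθ0 : 0 ≤ θ := by simp [hθ]; linarith
  have hθ1 : θ ≤ 1 := by simp [hθ]; linarith
  have hmpos : (0:ℝ) < m := by exact_mod_cast Nat.lt_of_lt_of_le Nat.zero_lt_two hm2
  have hΓm : 0 < Real.Gamma m := Real.Gamma_pos_of_pos hmpos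
  have hΓm1 : 0 < Real.Gamma ((m:ℝ) + 1) := Real.Gamma_pos_of_pos (by linarith)
  -- convexity
  have hconv := Real.convexOn_log_Gamma.2 (Set.mem_Ioi.mpr hmpos)
    (Set.mem_Ioi.mpr (show (0:ℝ) < (m:ℝ)+1 by linarith)) (by linarith : 0 ≤ 1 - θ) hθ0
    (by ring)
  simp only [Function.comp_apply, smul_eq_mul] at hconv
  have hpt : (1 - θ) * (m:ℝ) + θ * ((m:ℝ) + 1) = x := by simp only [hθ]; ring
  rw [hpt] at hconv
  have hΓ1 : Real.Gamma ((m:ℝ) + 1) = m * Real.Gamma m :=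
    Real.Gamma_add_one (by positivity)
  have hlog : Real.log (Real.Gamma x) ≤ Real.log (Real.Gamma m) + θ * Real.log m := by
    rw [hΓ1, Real.log_mul (by positivity) (ne_of_gt hΓm)] at hconv
    calc Real.log (Real.Gamma x) ≤ (1-θ) * Real.log (Real.Gamma m)
        + θ * (Real.log m + Real.log (Real.Gamma m)) := hconv
      _ = Real.log (Real.Gamma m) + θ * Real.log m := by ring
  have hΓx : Real.Gamma x ≤ Real.Gamma m * (m:ℝ) ^ θ := by
    have h1 : Real.Gamma x = Real.exp (Real.log (Real.Gamma x)) :=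
      (Real.exp_log (Real.Gamma_pos_of_pos hx0)).symm
    rw [h1, show Real.Gamma (m:ℝ) * (m:ℝ) ^ θ
        = Real.exp (Real.log (Real.Gamma m) + θ * Real.log m) by
      rw [Real.exp_add, Real.exp_log hΓm, Real.rpow_def_of_pos hmpos, mul_comm θ]]
    exact Real.exp_le_exp.mpr hlog
  -- replace Gamma m with factorial
  obtain ⟨k, hk⟩ : ∃ k, m = k + 1 := ⟨m - 1, by omega⟩
  have hk1 : 1 ≤ k := by omega
  have hkR : (m:ℝ) = (k:ℝ) + 1 := by rw [hk]; push_cast; ring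
  have hΓfact : Real.Gamma m = (Nat.factorial k : ℝ) := by
    rw [hkR, Real.Gamma_nat_eq_factorial]
  have hkx : (k:ℝ) ≤ x := by rw [hkR] at hmx; linarith
  have hkpos : (0:ℝ) < k := by exact_mod_cast hk1
  have step : Real.Gamma x ≤ Real.exp 1 * ((k:ℝ) ^ ((k:ℝ) + 1/2) * Real.exp (-(k:ℝ)))
      * (m:ℝ) ^ θ := by
    refine hΓx.trans ?_
    rw [hΓfact]
    exact mul_le_mul_of_nonneg_right (factorial_le_stirling k hk1) (by positivity)
  refine step.trans ?_
  have h1 : (k:ℝ) ^ ((k:ℝ) + 1/2) ≤ x ^ ((k:ℝ) + 1/2) :=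
    Real.rpow_le_rpow hkpos.le hkx (by positivity)
  have h2 : (m:ℝ) ^ θ ≤ x ^ θ := Real.rpow_le_rpow hmpos.le hmx hθ0
  have hexp : (k:ℝ) + 1/2 + θ = x - 1/2 := by
    simp only [hθ, hkR]; ring
  have e1 : x ^ ((k:ℝ)+1/2) * x ^ θ = x ^ (x - 1/2) := by
    rw [← Real.rpow_add hx0, hexp]
  have e2 : Real.exp (-(k:ℝ)) = Real.exp (x - k) * Real.exp (-x) := by
    rw [← Real.exp_add]; ring_nf
  have h3 : Real.exp 1 * (x ^ ((k:ℝ) + 1/2) * Real.exp (-(k:ℝ))) * x ^ θ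
      = Real.exp 1 * Real.exp (x - k) * (x ^ (x - 1/2) * Real.exp (-x)) := by
    calc Real.exp 1 * (x ^ ((k:ℝ) + 1/2) * Real.exp (-(k:ℝ))) * x ^ θ
        = Real.exp 1 * Real.exp (-(k:ℝ)) * (x ^ ((k:ℝ)+1/2) * x ^ θ) := by ring
      _ = Real.exp 1 * Real.exp (x - k) * (x ^ (x - 1/2) * Real.exp (-x)) := by
          rw [e1, e2]; ring
  calc Real.exp 1 * ((k:ℝ) ^ ((k:ℝ) + 1/2) * Real.exp (-(k:ℝ))) * (m:ℝ) ^ θ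
      ≤ Real.exp 1 * (x ^ ((k:ℝ) + 1/2) * Real.exp (-(k:ℝ))) * x ^ θ := by
        apply mul_le_mul (by gcongr) h2 (by positivity) (by positivity)
    _ = Real.exp 1 * Real.exp (x - k) * (x ^ (x - 1/2) * Real.exp (-x)) := h3
    _ ≤ 21 * (x ^ (x - 1/2) * Real.exp (-x)) := by
        apply mul_le_mul_of_nonneg_right _ (by positivity)
        have hxk : x - (k:ℝ) ≤ 2 := by
          rw [hkR] at hxm; linarith
        have : Real.exp 1 * Real.exp (x - k) ≤ Real.exp 1 * Real.exp 2 := by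
          gcongr <;> simp [hxk]
        refine this.trans ?_
        rw [← Real.exp_add]
        have h9 : Real.exp 1 < 2.7182818286 := Real.exp_one_lt_d9
        calc Real.exp (1+2 : ℝ) = Real.exp 1 ^ (3:ℕ) := by
              rw [← Real.exp_nat_mul]; norm_num
          _ ≤ 2.7182818286 ^ (3:ℕ) := pow_le_pow_left₀ (Real.exp_pos 1).le h9.le 3
          _ ≤ 21 := by norm_num

lemma prod_bound (l Δ : ℝ) (hl : 2 ≤ l) (hΔ : 0 < Δ) (hΔl : Δ ≤ l) :
    ∏ j ∈ range (⌈3*l⌉₊ + 1), ((l + j) / Real.sqrt ((l + j)^2 + Δ^2))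
      ≤ Real.exp (-Δ^2 / (4*l)) := by
  have hl0 : (0:ℝ) < l := by linarith
  set m : ℕ := ⌈3*l⌉₊ with hm
  have hm3 : 3*l ≤ (m:ℝ) := Nat.le_ceil _
  have ha : ∀ j : ℕ, (0:ℝ) < l + j := fun j => by positivity
  set P : ℝ := ∏ j ∈ range (m + 1), ((l + j) / Real.sqrt ((l + j)^2 + Δ^2)) with hP
  have hPnn : 0 ≤ P := Finset.prod_nonneg fun j _ => by positivity
  have hEnn : 0 ≤ Real.exp (-Δ^2 / (4*l)) := (Real.exp_pos _).le
  have hsq : P^2 ≤ (Real.exp (-Δ^2 / (4*l)))^2 := by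
    have hPsq : P^2 = ∏ j ∈ range (m + 1), ((l + j)^2 / ((l + j)^2 + Δ^2)) := by
      rw [hP, ← Finset.prod_pow]
      refine Finset.prod_congr rfl fun j _ => ?_
      rw [div_pow, Real.sq_sqrt (by positivity)]
    have hEsq : (Real.exp (-Δ^2 / (4*l)))^2 = Real.exp (-Δ^2 / (2*l)) := by
      rw [← Real.exp_nat_mul]
      congr 1
      field_simp
      ring
    rw [hPsq, hEsq]
    have hfac : ∀ j ∈ range (m+1), (l + (j:ℝ))^2 / ((l + j)^2 + Δ^2)
        ≤ Real.exp (-(Real.log 2 * (Δ^2 / (l + j)^2))) := by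
      intro j _
      set q : ℝ := Δ^2 / (l + j)^2 with hq
      have hq0 : 0 < q := by positivity
      have hq1 : q ≤ 1 := by
        rw [hq, div_le_one (by positivity)]
        nlinarith [ha j, (show (0:ℝ) ≤ (j:ℝ) from Nat.cast_nonneg j)]
      have hgm := Real.geom_mean_le_arith_mean2_weighted (by linarith : (0:ℝ) ≤ 1 - q)
        hq0.le (by norm_num : (0:ℝ) ≤ 1) (by norm_num : (0:ℝ) ≤ 2) (by ring)
      rw [Real.one_rpow, one_mul] at hgm
      have h2q : Real.exp (Real.log 2 * q) ≤ 1 + q := by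
        rw [← Real.rpow_def_of_pos (by norm_num : (0:ℝ) < 2)]
        linarith
      have key : (l + (j:ℝ))^2 / ((l + j)^2 + Δ^2) = 1 / (1 + q) := by
        rw [hq]
        field_simp
      rw [key, Real.exp_neg, inv_eq_one_div]
      exact one_div_le_one_div_of_le (Real.exp_pos _) h2q
    calc ∏ j ∈ range (m + 1), ((l + (j:ℝ))^2 / ((l + j)^2 + Δ^2))
        ≤ ∏ j ∈ range (m + 1), Real.exp (-(Real.log 2 * (Δ^2 / (l + j)^2))) :=
          Finset.prod_le_prod (fun j _ => by positivity) hfac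
      _ = Real.exp (∑ j ∈ range (m+1), -(Real.log 2 * (Δ^2 / (l + j)^2))) :=
          (Real.exp_sum _ _).symm
      _ ≤ Real.exp (-Δ^2 / (2*l)) := by
          rw [Real.exp_le_exp]
          have tele : ∑ j ∈ range (m+1), ((1:ℝ)/(l+j) - 1/(l+(j+1:ℕ)))
              = 1/l - 1/(l+(m+1:ℕ)) := by
            have := Finset.sum_range_sub' (f := fun i : ℕ => (1:ℝ)/(l+i)) (n := m+1)
            simpa using this
          have hterm : ∀ j ∈ range (m+1), (1:ℝ)/(l+j) - 1/(l+(j+1:ℕ))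
              ≤ Δ^2 / (l + j)^2 / Δ^2 := by
            intro j _
            have hj0 : (0:ℝ) < l + j := ha j
            have hj1 : (0:ℝ) < l + (j+1:ℕ) := ha (j+1)
            have hc : (l + ((j+1:ℕ):ℝ)) = (l + j) + 1 := by push_cast; ring
            have hd : Δ^2 / (l + (j:ℝ))^2 / Δ^2 = 1/(l+j)^2 := by field_simp
            rw [hd, hc, div_sub_div _ _ (ne_of_gt hj0) (by positivity : l+(j:ℝ)+1 ≠ 0),
              div_le_div_iff₀ (by positivity) (by positivity)]
            nlinarith
          have hsum1 : (1:ℝ)/l - 1/(l+(m+1:ℕ))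
              ≤ ∑ j ∈ range (m+1), Δ^2 / (l + j)^2 / Δ^2 := by
            rw [← tele]
            exact Finset.sum_le_sum hterm
          have hsum2 : ∑ j ∈ range (m+1), Δ^2 / (l + j)^2 / Δ^2
              = (∑ j ∈ range (m+1), Δ^2 / (l + j)^2) / Δ^2 := by
            rw [Finset.sum_div]
          have hquarter : (3:ℝ)/(4*l) ≤ 1/l - 1/(l+(m+1:ℕ)) := by
            have h4 : 4*l ≤ l + ((m+1:ℕ):ℝ) := by push_cast; linarith
            have : 1/(l + ((m+1:ℕ):ℝ)) ≤ 1/(4*l) :=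
              one_div_le_one_div_of_le (by linarith) h4
            have h1l : (1:ℝ)/l - 1/(4*l) = 3/(4*l) := by field_simp; ring
            linarith
          have hS : 3*Δ^2/(4*l) ≤ ∑ j ∈ range (m+1), Δ^2 / (l + j)^2 := by
            have := hsum1.trans (le_of_eq hsum2)
            have h := mul_le_mul_of_nonneg_right ((hquarter.trans this)) (sq_nonneg Δ)
            rw [div_mul_cancel₀ _ (by positivity : Δ^2 ≠ 0)] at h
            calc 3*Δ^2/(4*l) = 3/(4*l) * Δ^2 := by ring
              _ ≤ _ := h
          have hlog2 : (0.6931471803:ℝ) < Real.log 2 := Real.log_two_gt_d9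
          have hfin : Δ^2/(2*l) ≤ Real.log 2 * ∑ j ∈ range (m+1), Δ^2 / (l + j)^2 := by
            calc Δ^2/(2*l) ≤ 0.6931471803 * (3*Δ^2/(4*l)) := by
                  rw [div_le_iff₀ (by positivity)]
                  have : (0.6931471803:ℝ) * (3*Δ^2/(4*l)) * (2*l) = 0.6931471803 * 1.5 * Δ^2 := by
                    field_simp; ring
                  rw [this]
                  nlinarith [sq_nonneg Δ]
              _ ≤ Real.log 2 * (3*Δ^2/(4*l)) := by
                  apply mul_le_mul_of_nonneg_right hlog2.le (by positivity)
              _ ≤ Real.log 2 * ∑ j ∈ range (m+1), Δ^2 / (l + j)^2 := by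
                  apply mul_le_mul_of_nonneg_left hS
                  have : (0:ℝ) < Real.log 2 := by linarith
                  linarith
          rw [Finset.sum_neg_distrib, neg_div, neg_le_neg_iff, ← Finset.mul_sum]
          exact hfin
  calc P = Real.sqrt (P^2) := by rw [Real.sqrt_sq hPnn]
    _ ≤ Real.sqrt ((Real.exp (-Δ^2 / (4*l)))^2) := Real.sqrt_le_sqrt hsq
    _ = Real.exp (-Δ^2 / (4*l)) := Real.sqrt_sq hEnn

theorem omega_tail_bound :
    ∃ C : ℝ, 0 < C ∧ ∀ l T₁ T₂ Δ t : ℝ, 2 ≤ l → 0 < Δ → Δ ≤ l → T₁ ≤ T₂ →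
      T₂ - T₁ ≤ l → (t ≤ T₁ - Δ ∨ T₂ + Δ ≤ t) →
      ‖(Complex.exp (l : ℂ) / (2 * ↑π)) *
          ∫ u in T₁..T₂, Complex.Gamma ((l : ℂ) + (u - t) * I) *
            (l : ℂ) ^ (-((l : ℂ) + (u - t) * I))‖ ≤
        C * l ^ ((1:ℝ)/2) * Real.exp (-Δ ^ 2 / (4 * l)) := by
  refine ⟨21, by norm_num, ?_⟩
  intro l T₁ T₂ Δ t hl hΔ hΔl hT hTl hcase
  have hl0 : (0:ℝ) < l := by linarith
  set E : ℝ := Real.exp (-Δ ^ 2 / (4 * l)) with hE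
  have hE0 : 0 < E := Real.exp_pos _
  set C₀ : ℝ := Real.Gamma l * l ^ (-l : ℝ) * E with hC₀
  have hΓl : 0 < Real.Gamma l := Real.Gamma_pos_of_pos hl0
  have hC₀0 : 0 ≤ C₀ := by positivity
  -- pointwise bound
  have hnorm : ∀ u ∈ Set.uIoc T₁ T₂,
      ‖Complex.Gamma ((l : ℂ) + (u - t) * I) * (l : ℂ) ^ (-((l : ℂ) + (u - t) * I))‖ ≤ C₀ := by
    intro u hu
    rw [Set.uIoc_of_le hT] at hu
    have hut : Δ^2 ≤ (u - t)^2 := by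
      rcases hcase with h | h
      · nlinarith [hu.1]
      · nlinarith [hu.2]
    rw [show (u:ℂ) - (t:ℂ) = ((u - t : ℝ) : ℂ) by push_cast; ring]
    rw [norm_mul]
    have h2 : ‖(l : ℂ) ^ (-((l : ℂ) + ((u - t : ℝ) : ℂ) * I))‖ = l ^ (-l : ℝ) := by
      rw [Complex.norm_cpow_eq_rpow_re_of_pos hl0]
      congr 1
      simp
    rw [h2]
    have h1 : ‖Complex.Gamma ((l : ℂ) + ((u - t : ℝ) : ℂ) * I)‖ ≤ Real.Gamma l * E := by
      refine (abs_Gamma_le_prod l (u - t) hl0 ⌈3*l⌉₊).trans ?_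
      have hprodmono : ∏ j ∈ range (⌈3*l⌉₊ + 1), ((l + j) / Real.sqrt ((l + j) ^ 2 + (u-t) ^ 2))
          ≤ ∏ j ∈ range (⌈3*l⌉₊ + 1), ((l + j) / Real.sqrt ((l + j) ^ 2 + Δ ^ 2)) := by
        refine Finset.prod_le_prod (fun j _ => by positivity) (fun j _ => ?_)
        apply div_le_div_of_nonneg_left (by positivity) (by positivity)
        exact Real.sqrt_le_sqrt (by nlinarith)
      exact mul_le_mul_of_nonneg_left (hprodmono.trans (prod_bound l Δ hl hΔ hΔl)) hΓl.le
    calc ‖Complex.Gamma ((l : ℂ) + ((u - t : ℝ) : ℂ) * I)‖ * l ^ (-l : ℝ)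
        ≤ (Real.Gamma l * E) * l ^ (-l : ℝ) :=
          mul_le_mul_of_nonneg_right h1 (by positivity)
      _ = C₀ := by rw [hC₀]; ring
  have hint : ‖∫ u in T₁..T₂, Complex.Gamma ((l : ℂ) + (u - t) * I) *
      (l : ℂ) ^ (-((l : ℂ) + (u - t) * I))‖ ≤ C₀ * |T₂ - T₁| :=
    intervalIntegral.norm_integral_le_of_norm_le_const hnorm
  have habs : ‖Complex.exp (l : ℂ) / (2 * ↑π)‖ = Real.exp l / (2 * π) := by
    rw [norm_div, Complex.norm_exp, norm_mul, Complex.norm_two, Complex.norm_real, Real.norm_eq_abs,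
      Complex.ofReal_re, _root_.abs_of_pos Real.pi_pos]
  rw [norm_mul, habs]
  have hTT : |T₂ - T₁| ≤ l := by
    rw [_root_.abs_of_nonneg (by linarith : (0:ℝ) ≤ T₂ - T₁)]
    exact hTl
  have step1 : Real.exp l / (2 * π) * ‖∫ u in T₁..T₂, Complex.Gamma ((l : ℂ) + (u - t) * I) *
      (l : ℂ) ^ (-((l : ℂ) + (u - t) * I))‖ ≤ Real.exp l / (2 * π) * (C₀ * l) := by
    apply mul_le_mul_of_nonneg_left _ (by positivity)
    exact hint.trans (mul_le_mul_of_nonneg_left hTT hC₀0)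
  refine step1.trans ?_
  -- final algebra
  have hΓ : Real.Gamma l ≤ 21 * (l ^ (l - 1/2 : ℝ) * Real.exp (-l)) := Gamma_le_stirling l hl
  have hrp : l ^ (l - 1/2 : ℝ) * l ^ (-l : ℝ) * l = l ^ ((1:ℝ)/2) := by
    rw [← Real.rpow_add hl0]
    have h1 : l ^ ((l - 1/2) + -l : ℝ) * l = l ^ ((l - 1/2) + -l : ℝ) * l ^ (1:ℝ) := by
      rw [Real.rpow_one]
    rw [h1, ← Real.rpow_add hl0]
    congr 1
    ring
  have hpi : 1 ≤ 2 * π := by nlinarith [Real.pi_gt_three]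
  calc Real.exp l / (2 * π) * (C₀ * l)
      = (Real.exp l * Real.Gamma l * l ^ (-l : ℝ) * l / (2 * π)) * E := by
        rw [hC₀]; ring
    _ ≤ (Real.exp l * (21 * (l ^ (l - 1/2 : ℝ) * Real.exp (-l))) * l ^ (-l : ℝ) * l / (2 * π)) * E := by
        gcongr
    _ = (21 * (l ^ (l - 1/2 : ℝ) * l ^ (-l : ℝ) * l) / (2 * π)) * E := by
        have hee : Real.exp l * Real.exp (-l) = 1 := by
          rw [← Real.exp_add]; simp
        linear_combination (21 * l ^ (l - 1/2 : ℝ) * l ^ (-l:ℝ) * l * E / (2*π)) * hee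
    _ = (21 * l ^ ((1:ℝ)/2) / (2*π)) * E := by rw [hrp]
    _ ≤ 21 * l ^ ((1:ℝ)/2) * E := by
        apply mul_le_mul_of_nonneg_right _ hE0.le
        apply div_le_self (by positivity) hpi
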